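/- Let V be a Q-vector space and L = FreeLie(V). Regard L^{⊗n} ⊗ L → L^{⊗n} as the n-fold tensor adjoint action. Then there is a surjective Q-linear map π : L^{⊗n} ⊗ L → L^{⊗n} ⊗ V, natural in V, uniquely determined by: (1) π(z ⊗ v) = z ⊗ v for v ∈ V ⊂ L; (2) π(z ⊗ [X,Y]) = π(z·X ⊗ Y) − π(z·Y ⊗ X) for all X, Y ∈ L, where z·X denotes the adjoint action of X on z ∈ L^{⊗n}. -/

import Mathlib

open scoped TensorProduct

attribute [local instance 100] LieRing.ofAssociativeRing

/-- The free Lie algebra on the `ℚ`-vector space `V`, realized as the Lie subalgebra of the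
tensor algebra `T(V)` (with commutator bracket) generated by `V`. -/
noncomputable def freeLieOn (V : Type*) [AddCommGroup V] [Module ℚ V] :
    LieSubalgebra ℚ (TensorAlgebra ℚ V) :=
  LieSubalgebra.lieSpan ℚ _ (Set.range (TensorAlgebra.ι ℚ (M := V)))

/-- The canonical linear inclusion `V → FreeLie(V)`. -/
noncomputable def freeLieOn.of (V : Type*) [AddCommGroup V] [Module ℚ V] :
    V →ₗ[ℚ] (freeLieOn V) :=
  LinearMap.codRestrict (freeLieOn V).toSubmodule (TensorAlgebra.ι ℚ)
    (fun v => LieSubalgebra.subset_lieSpan (Set.mem_range_self v))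

open TensorAlgebra
set_option synthInstance.maxHeartbeats 1000000
set_option maxHeartbeats 1000000

namespace PiAux
variable (V : Type*) [AddCommGroup V] [Module ℚ V]

noncomputable def eps : TensorAlgebra ℚ V →ₐ[ℚ] ℚ := TensorAlgebra.lift ℚ 0

variable {V}

@[simp] lemma eps_ι (v : V) : eps V (ι ℚ v) = 0 := by simp [eps]

noncomputable def act (a : TensorAlgebra ℚ V) :
    (TensorAlgebra ℚ V ⊗[ℚ] V) →ₗ[ℚ] (TensorAlgebra ℚ V ⊗[ℚ] V) :=
  (LinearMap.mulLeft ℚ a).rTensor V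

@[simp] lemma act_tmul (a b : TensorAlgebra ℚ V) (v : V) :
    act a (b ⊗ₜ v) = (a * b) ⊗ₜ v := rfl

lemma act_add (a b : TensorAlgebra ℚ V) (m : TensorAlgebra ℚ V ⊗[ℚ] V) :
    act (a + b) m = act a m + act b m := by
  have : LinearMap.mulLeft ℚ (a + b) = LinearMap.mulLeft ℚ a + LinearMap.mulLeft ℚ b := by
    ext x; simp [add_mul]
  simp [act, this, LinearMap.rTensor_add]

lemma act_smul (r : ℚ) (a : TensorAlgebra ℚ V) (m : TensorAlgebra ℚ V ⊗[ℚ] V) :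
    act (r • a) m = r • act a m := by
  have : LinearMap.mulLeft ℚ (r • a) = r • LinearMap.mulLeft ℚ a := by
    ext x; simp [smul_mul_assoc]
  simp [act, this, LinearMap.rTensor_smul]

lemma act_mul (a b : TensorAlgebra ℚ V) (m : TensorAlgebra ℚ V ⊗[ℚ] V) :
    act (a * b) m = act a (act b m) := by
  have : LinearMap.mulLeft ℚ (a * b) = (LinearMap.mulLeft ℚ a).comp (LinearMap.mulLeft ℚ b) := by
    ext x; simp [mul_assoc]
  simp [act, this, LinearMap.rTensor_comp]

@[simp] lemma act_one (m : TensorAlgebra ℚ V ⊗[ℚ] V) : act 1 m = m := by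
  have : LinearMap.mulLeft ℚ (1 : TensorAlgebra ℚ V) = LinearMap.id := by ext x; simp
  simp [act, this]

variable (V) in
/-- auxiliary algebra `T(V) ⋉ (T(V) ⊗ V)` -/
def Baux := (TensorAlgebra ℚ V) × ((TensorAlgebra ℚ V) ⊗[ℚ] V)

noncomputable instance : AddCommGroup (Baux V) := inferInstanceAs (AddCommGroup (_ × _))
noncomputable instance : Module ℚ (Baux V) := inferInstanceAs (Module ℚ (_ × _))

noncomputable instance : Mul (Baux V) :=
  ⟨fun p q => (p.1 * q.1, eps V q.1 • p.2 + act p.1 q.2)⟩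

lemma Baux.mul_def (p q : Baux V) :
    p * q = (p.1 * q.1, eps V q.1 • p.2 + act p.1 q.2) := rfl

noncomputable instance : One (Baux V) := ⟨((1 : TensorAlgebra ℚ V), 0)⟩

lemma Baux.one_def : (1 : Baux V) = ((1 : TensorAlgebra ℚ V), 0) := rfl

noncomputable instance : Ring (Baux V) :=
  { (inferInstance : AddCommGroup (Baux V)), (inferInstance : Mul (Baux V)),
    (inferInstance : One (Baux V)) with
    mul_assoc := fun p q r => by
      apply Prod.ext
      · exact mul_assoc _ _ _
      · show eps V r.1 • (eps V q.1 • p.2 + act p.1 q.2) + act (p.1 * q.1) r.2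
            = eps V (q.1 * r.1) • p.2 + act p.1 (eps V r.1 • q.2 + act q.1 r.2)
        rw [map_mul, act_mul, smul_add, mul_smul, map_add, map_smul, smul_comm]
        abel
    one_mul := fun p => by
      apply Prod.ext
      · exact one_mul _
      · show eps V p.1 • (0 : TensorAlgebra ℚ V ⊗[ℚ] V) + act 1 p.2 = p.2
        simp
    mul_one := fun p => by
      apply Prod.ext
      · exact mul_one _
      · show eps V 1 • p.2 + act p.1 0 = p.2
        simp
    left_distrib := fun p q r => by
      apply Prod.ext
      · exact mul_add _ _ _
      · show eps V (q.1 + r.1) • p.2 + act p.1 (q.2 + r.2)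
            = (eps V q.1 • p.2 + act p.1 q.2) + (eps V r.1 • p.2 + act p.1 r.2)
        rw [map_add, add_smul, map_add]
        abel
    right_distrib := fun p q r => by
      apply Prod.ext
      · exact add_mul _ _ _
      · show eps V r.1 • (p.2 + q.2) + act (p.1 + q.1) r.2
            = (eps V r.1 • p.2 + act p.1 r.2) + (eps V r.1 • q.2 + act q.1 r.2)
        rw [smul_add, act_add]
        abel
    zero_mul := fun p => by
      apply Prod.ext
      · exact zero_mul _
      · show eps V p.1 • (0 : TensorAlgebra ℚ V ⊗[ℚ] V) + act 0 p.2 = 0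
        have : act (0 : TensorAlgebra ℚ V) p.2 = 0 := by
          have h := act_smul (0 : ℚ) (0 : TensorAlgebra ℚ V) p.2
          simpa using h
        simp [this]
    mul_zero := fun p => by
      apply Prod.ext
      · exact mul_zero _
      · show eps V 0 • p.2 + act p.1 0 = 0
        simp }

noncomputable instance : Algebra ℚ (Baux V) :=
  Algebra.ofModule
    (fun r p q => by
      apply Prod.ext
      · exact smul_mul_assoc r p.1 q.1
      · show eps V q.1 • (r • p.2) + act (r • p.1) q.2
            = r • (eps V q.1 • p.2 + act p.1 q.2)
        rw [act_smul, smul_add, smul_comm])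
    (fun r p q => by
      apply Prod.ext
      · exact mul_smul_comm r p.1 q.1
      · show eps V (r • q.1) • p.2 + act p.1 (r • q.2)
            = r • (eps V q.1 • p.2 + act p.1 q.2)
        rw [map_smul, smul_add, smul_assoc, LinearMap.map_smul_of_tower])

variable (V) in
/-- first projection as algebra hom -/
noncomputable def Baux.fst : Baux V →ₐ[ℚ] TensorAlgebra ℚ V where
  toFun p := p.1
  map_one' := rfl
  map_mul' _ _ := rfl
  map_zero' := rfl
  map_add' _ _ := rfl
  commutes' r := by
    show (algebraMap ℚ (Baux V) r).1 = algebraMap ℚ (TensorAlgebra ℚ V) r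
    rw [Algebra.algebraMap_eq_smul_one, Algebra.algebraMap_eq_smul_one]
    rfl

variable (V) in
/-- the universal map into `Baux` -/
noncomputable def Psi : TensorAlgebra ℚ V →ₐ[ℚ] Baux V :=
  TensorAlgebra.lift ℚ
    (LinearMap.prod (ι ℚ) ((TensorProduct.mk ℚ (TensorAlgebra ℚ V) V) 1))

@[simp] lemma Psi_ι (v : V) : Psi V (ι ℚ v) = (ι ℚ v, (1 : TensorAlgebra ℚ V) ⊗ₜ v) := by
  rw [Psi]
  exact TensorAlgebra.lift_ι_apply _ _

lemma fst_Psi (a : TensorAlgebra ℚ V) : (Psi V a).1 = a := by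
  have : (Baux.fst V).comp (Psi V) = AlgHom.id ℚ (TensorAlgebra ℚ V) := by
    apply TensorAlgebra.hom_ext
    ext v
    simp [Baux.fst]
    rfl
  exact DFunLike.congr_fun this a

variable (V) in
/-- the "last letter" decomposition map -/
noncomputable def delta : TensorAlgebra ℚ V →ₗ[ℚ] (TensorAlgebra ℚ V ⊗[ℚ] V) :=
  (LinearMap.snd ℚ _ _).comp (Psi V).toLinearMap

@[simp] lemma delta_ι (v : V) : delta V (ι ℚ v) = (1 : TensorAlgebra ℚ V) ⊗ₜ v := by
  show (Psi V (ι ℚ v)).2 = _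
  rw [Psi_ι]

lemma Psi_eq (a : TensorAlgebra ℚ V) : Psi V a = (a, delta V a) := by
  apply Prod.ext
  · exact fst_Psi a
  · rfl

lemma delta_mul (a b : TensorAlgebra ℚ V) :
    delta V (a * b) = eps V b • delta V a + act a (delta V b) := by
  have h := Psi_eq (a * b)
  rw [map_mul, Psi_eq a, Psi_eq b] at h
  exact (congrArg Prod.snd h).symm

@[simp] lemma delta_one : delta V (1 : TensorAlgebra ℚ V) = 0 := by
  have h := Psi_eq (1 : TensorAlgebra ℚ V)
  rw [map_one, Baux.one_def] at h
  exact (congrArg Prod.snd h).symm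

lemma eps_mem_freeLie {a : TensorAlgebra ℚ V} (h : a ∈ freeLieOn V) : eps V a = 0 := by
  let K : LieSubalgebra ℚ (TensorAlgebra ℚ V) :=
    { (LinearMap.ker (eps V).toLinearMap) with
      lie_mem' := fun {x y} hx hy => by
        have hx' : eps V x = 0 := hx
        have hy' : eps V y = 0 := hy
        show eps V ⁅x, y⁆ = 0
        rw [Ring.lie_def, map_sub, map_mul, map_mul, hx', hy']
        ring }
  have hle : freeLieOn V ≤ K := by
    rw [freeLieOn, LieSubalgebra.lieSpan_le]
    rintro _ ⟨v, rfl⟩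
    show eps V _ = 0
    simp
  exact hle h

lemma lie_helper {L : Type*} [LieRing L] (a x y : L) :
    ⁅⁅a, x⁆, y⁆ - ⁅⁅a, y⁆, x⁆ = ⁅a, ⁅x, y⁆⁆ := by
  rw [leibniz_lie a x y, ← lie_skew x ⁅a, y⁆]
  abel

section Rho
variable {n : ℕ} {ρ : (freeLieOn V) → Module.End ℚ (⨂[ℚ]^n (freeLieOn V))}
  (hρ : ∀ (y : freeLieOn V) (x : Fin n → freeLieOn V),
      ρ y (PiTensorProduct.tprod ℚ x) =
        ∑ i : Fin n, PiTensorProduct.tprod ℚ (Function.update x i ⁅x i, y⁆))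

include hρ

lemma rho_add (y y' : freeLieOn V) : ρ (y + y') = ρ y + ρ y' := by
  apply PiTensorProduct.ext
  ext x
  simp [hρ, lie_add, MultilinearMap.map_update_add, Finset.sum_add_distrib]

lemma rho_smul (r : ℚ) (y : freeLieOn V) : ρ (r • y) = r • ρ y := by
  apply PiTensorProduct.ext
  ext x
  simp [hρ, lie_smul, MultilinearMap.map_update_smul, Finset.smul_sum]

lemma rho_zero : ρ 0 = 0 := by
  have := rho_smul hρ 0 0
  simpa using this

lemma rho_bracket (X Y : freeLieOn V) : ρ ⁅X, Y⁆ = ρ Y * ρ X - ρ X * ρ Y := by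
  apply PiTensorProduct.ext
  ext x
  classical
  set f : (freeLieOn V) → (freeLieOn V) → Fin n → Fin n →
      (⨂[ℚ]^n (freeLieOn V)) := fun P Q i j =>
    PiTensorProduct.tprod ℚ (Function.update (Function.update x i ⁅x i, P⁆) j
      ⁅(Function.update x i ⁅x i, P⁆) j, Q⁆) with hf
  have expand : ∀ (P Q : freeLieOn V),
      ρ Q (ρ P (PiTensorProduct.tprod ℚ x)) = ∑ i : Fin n, ∑ j : Fin n, f P Q i j := by
    intro P Q
    rw [hρ, map_sum]
    exact Finset.sum_congr rfl fun i _ => hρ Q _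
  show ρ ⁅X, Y⁆ (PiTensorProduct.tprod ℚ x)
      = (ρ Y * ρ X - ρ X * ρ Y) (PiTensorProduct.tprod ℚ x)
  rw [LinearMap.sub_apply, Module.End.mul_apply, Module.End.mul_apply, expand, expand, hρ]
  have hswap : (∑ i : Fin n, ∑ j : Fin n, f Y X i j)
      = ∑ i : Fin n, ∑ j : Fin n, f Y X j i := Finset.sum_comm
  rw [hswap, ← Finset.sum_sub_distrib]
  refine Finset.sum_congr rfl fun i _ => ?_
  rw [← Finset.sum_sub_distrib]
  rw [Finset.sum_eq_single i]
  · have e1 : f X Y i i = PiTensorProduct.tprod ℚ (Function.update x i ⁅⁅x i, X⁆, Y⁆) := by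
      rw [hf]
      simp only [Function.update_self, Function.update_idem]
    have e2 : f Y X i i = PiTensorProduct.tprod ℚ (Function.update x i ⁅⁅x i, Y⁆, X⁆) := by
      rw [hf]
      simp only [Function.update_self, Function.update_idem]
    rw [e1, e2, ← MultilinearMap.map_update_sub, lie_helper]
  · intro j _ hj
    have e1 : f X Y i j = PiTensorProduct.tprod ℚ
        (Function.update (Function.update x i ⁅x i, X⁆) j ⁅x j, Y⁆) := by
      rw [hf]
      simp only [Function.update_of_ne hj]
    have e2 : f Y X j i = PiTensorProduct.tprod ℚ
        (Function.update (Function.update x j ⁅x j, Y⁆) i ⁅x i, X⁆) := by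
      rw [hf]
      simp only [Function.update_of_ne (Ne.symm hj)]
    rw [e1, e2, Function.update_comm hj]
    exact sub_self _
  · intro h
    exact absurd (Finset.mem_univ i) h

end Rho

section Tau
variable (n : ℕ) (ρ : (freeLieOn V) → Module.End ℚ (⨂[ℚ]^n (freeLieOn V)))
  (hρ : ∀ (y : freeLieOn V) (x : Fin n → freeLieOn V),
      ρ y (PiTensorProduct.tprod ℚ x) =
        ∑ i : Fin n, PiTensorProduct.tprod ℚ (Function.update x i ⁅x i, y⁆))

/-- `v ↦ ρ (of v)` as a linear map -/
noncomputable def frho : V →ₗ[ℚ] Module.End ℚ (⨂[ℚ]^n (freeLieOn V)) where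
  toFun v := ρ (freeLieOn.of V v)
  map_add' v w := by
    show ρ (freeLieOn.of V (v + w)) = ρ (freeLieOn.of V v) + ρ (freeLieOn.of V w)
    rw [map_add, rho_add hρ]
  map_smul' r v := by
    show ρ (freeLieOn.of V (r • v)) = r • ρ (freeLieOn.of V v)
    rw [map_smul, rho_smul hρ]

/-- the anti-representation of `T(V)` extending `ρ` -/
noncomputable def sigma :
    TensorAlgebra ℚ V →ₐ[ℚ] (Module.End ℚ (⨂[ℚ]^n (freeLieOn V)))ᵐᵒᵖ :=
  TensorAlgebra.lift ℚ ((MulOpposite.opLinearEquiv ℚ).toLinearMap ∘ₗ frho n ρ hρ)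

/-- linear version -/
noncomputable def tauL :
    TensorAlgebra ℚ V →ₗ[ℚ] Module.End ℚ (⨂[ℚ]^n (freeLieOn V)) :=
  ((MulOpposite.opLinearEquiv ℚ).symm.toLinearMap) ∘ₗ (sigma n ρ hρ).toLinearMap

@[simp] lemma tauL_ι (v : V) : tauL n ρ hρ (ι ℚ v) = ρ (freeLieOn.of V v) := by
  simp [tauL, sigma, frho]

@[simp] lemma tauL_one : tauL n ρ hρ 1 = 1 := by
  simp [tauL]

lemma tauL_mul (a b : TensorAlgebra ℚ V) :
    tauL n ρ hρ (a * b) = tauL n ρ hρ b * tauL n ρ hρ a := by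
  simp only [tauL, LinearMap.comp_apply, AlgHom.toLinearMap_apply, map_mul]
  rfl

lemma tauL_coe (X : freeLieOn V) : tauL n ρ hρ (X : TensorAlgebra ℚ V) = ρ X := by
  let K : LieSubalgebra ℚ (TensorAlgebra ℚ V) :=
    { carrier := {a | ∃ h : a ∈ freeLieOn V, tauL n ρ hρ a = ρ ⟨a, h⟩},
      add_mem' := by
        rintro a b ⟨ha, hta⟩ ⟨hb, htb⟩
        exact ⟨add_mem ha hb, by
          rw [map_add, hta, htb]
          exact (rho_add hρ ⟨a, ha⟩ ⟨b, hb⟩).symm⟩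
      zero_mem' := ⟨zero_mem _, by rw [map_zero]; exact (rho_zero hρ).symm⟩
      smul_mem' := by
        rintro r a ⟨ha, hta⟩
        exact ⟨Submodule.smul_mem (freeLieOn V).toSubmodule r ha, by
          rw [map_smul, hta]
          exact (rho_smul hρ r ⟨a, ha⟩).symm⟩
      lie_mem' := by
        rintro a b ⟨ha, hta⟩ ⟨hb, htb⟩
        refine ⟨(freeLieOn V).lie_mem ha hb, ?_⟩
        conv_lhs => rw [Ring.lie_def]
        rw [map_sub, tauL_mul, tauL_mul, hta, htb]
        exact (rho_bracket hρ ⟨a, ha⟩ ⟨b, hb⟩).symm }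
  have hle : freeLieOn V ≤ K := by
    rw [freeLieOn, LieSubalgebra.lieSpan_le]
    rintro _ ⟨v, rfl⟩
    exact ⟨LieSubalgebra.subset_lieSpan (Set.mem_range_self v), by rw [tauL_ι]; rfl⟩
  obtain ⟨h, ht⟩ := hle X.2
  rw [ht]

end Tau

section Pi
variable (n : ℕ) (ρ : (freeLieOn V) → Module.End ℚ (⨂[ℚ]^n (freeLieOn V)))
  (hρ : ∀ (y : freeLieOn V) (x : Fin n → freeLieOn V),
      ρ y (PiTensorProduct.tprod ℚ x) =
        ∑ i : Fin n, PiTensorProduct.tprod ℚ (Function.update x i ⁅x i, y⁆))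

local notation "M" => (⨂[ℚ]^n (freeLieOn V))

/-- bilinear core -/
noncomputable def B1 : TensorAlgebra ℚ V →ₗ[ℚ] V →ₗ[ℚ] (M →ₗ[ℚ] (M ⊗[ℚ] V)) where
  toFun a := (LinearMap.llcomp ℚ M M (M ⊗[ℚ] V)).flip (tauL n ρ hρ a) ∘ₗ
    (TensorProduct.mk ℚ M V).flip
  map_add' a b := by
    ext v z
    simp [map_add]
  map_smul' r a := by
    ext v z
    simp [map_smul]

noncomputable def Phib : ((TensorAlgebra ℚ V) ⊗[ℚ] V) →ₗ[ℚ] (M →ₗ[ℚ] (M ⊗[ℚ] V)) :=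
  TensorProduct.lift (B1 n ρ hρ)

@[simp] lemma Phib_tmul (a : TensorAlgebra ℚ V) (v : V) (z : M) :
    Phib n ρ hρ (a ⊗ₜ v) z = (tauL n ρ hρ a z) ⊗ₜ v := rfl

lemma Phib_act (a : TensorAlgebra ℚ V) (w : (TensorAlgebra ℚ V) ⊗[ℚ] V) (z : M) :
    Phib n ρ hρ (act a w) z = Phib n ρ hρ w (tauL n ρ hρ a z) := by
  induction w using TensorProduct.induction_on with
  | zero => simp
  | tmul b v => rw [act_tmul]; simp [tauL_mul, Module.End.mul_apply]
  | add w₁ w₂ ih₁ ih₂ => simp only [map_add, LinearMap.add_apply, ih₁, ih₂]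

/-- the retraction -/
noncomputable def piMap : (M ⊗[ℚ] (freeLieOn V)) →ₗ[ℚ] (M ⊗[ℚ] V) :=
  TensorProduct.lift
    ((Phib n ρ hρ ∘ₗ delta V ∘ₗ (freeLieOn V).toSubmodule.subtype).flip)

lemma piMap_tmul (z : M) (X : freeLieOn V) :
    piMap n ρ hρ (z ⊗ₜ X) = Phib n ρ hρ (delta V (X : TensorAlgebra ℚ V)) z := rfl

lemma piMap_prop1 (z : M) (v : V) :
    piMap n ρ hρ (z ⊗ₜ freeLieOn.of V v) = z ⊗ₜ v := by
  rw [piMap_tmul]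
  have : ((freeLieOn.of V v : freeLieOn V) : TensorAlgebra ℚ V) = ι ℚ v := rfl
  rw [this, delta_ι, Phib_tmul, tauL_one]
  rfl

lemma piMap_prop2 (z : M) (X Y : freeLieOn V) :
    piMap n ρ hρ (z ⊗ₜ ⁅X, Y⁆) = piMap n ρ hρ ((ρ X z) ⊗ₜ Y) - piMap n ρ hρ ((ρ Y z) ⊗ₜ X) := by
  rw [piMap_tmul, piMap_tmul, piMap_tmul]
  have hcoe : ((⁅X, Y⁆ : freeLieOn V) : TensorAlgebra ℚ V)
      = (X : TensorAlgebra ℚ V) * Y - (Y : TensorAlgebra ℚ V) * X := by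
    rw [← Ring.lie_def]; rfl
  rw [hcoe, map_sub, delta_mul, delta_mul, eps_mem_freeLie X.2, eps_mem_freeLie Y.2,
    zero_smul, zero_smul, zero_add, zero_add, map_sub, LinearMap.sub_apply,
    Phib_act, Phib_act, tauL_coe, tauL_coe]

end Pi

section Main
variable (n : ℕ) (ρ : (freeLieOn V) → Module.End ℚ (⨂[ℚ]^n (freeLieOn V)))

local notation "M" => (⨂[ℚ]^n (freeLieOn V))

lemma pi_unique (π₁ π₂ : (M ⊗[ℚ] (freeLieOn V)) →ₗ[ℚ] (M ⊗[ℚ] V))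
    (h₁v : ∀ z (v : V), π₁ (z ⊗ₜ freeLieOn.of V v) = z ⊗ₜ v)
    (h₁b : ∀ z X Y, π₁ (z ⊗ₜ ⁅X, Y⁆) = π₁ ((ρ X z) ⊗ₜ Y) - π₁ ((ρ Y z) ⊗ₜ X))
    (h₂v : ∀ z (v : V), π₂ (z ⊗ₜ freeLieOn.of V v) = z ⊗ₜ v)
    (h₂b : ∀ z X Y, π₂ (z ⊗ₜ ⁅X, Y⁆) = π₂ ((ρ X z) ⊗ₜ Y) - π₂ ((ρ Y z) ⊗ₜ X)) :
    π₁ = π₂ := by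
  have key : ∀ (X : freeLieOn V) (z : M), π₁ (z ⊗ₜ X) = π₂ (z ⊗ₜ X) := by
    let K : LieSubalgebra ℚ (TensorAlgebra ℚ V) :=
      { carrier := {a | ∃ h : a ∈ freeLieOn V,
          ∀ z : M, π₁ (z ⊗ₜ (⟨a, h⟩ : freeLieOn V)) = π₂ (z ⊗ₜ (⟨a, h⟩ : freeLieOn V))},
        add_mem' := by
          rintro a b ⟨ha, hpa⟩ ⟨hb, hpb⟩
          refine ⟨add_mem ha hb, fun z => ?_⟩
          show π₁ (z ⊗ₜ ((⟨a, ha⟩ : freeLieOn V) + ⟨b, hb⟩))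
              = π₂ (z ⊗ₜ ((⟨a, ha⟩ : freeLieOn V) + ⟨b, hb⟩))
          rw [TensorProduct.tmul_add, map_add, map_add, hpa, hpb]
        zero_mem' := by
          refine ⟨zero_mem _, fun z => ?_⟩
          show π₁ (z ⊗ₜ (0 : freeLieOn V)) = π₂ (z ⊗ₜ (0 : freeLieOn V))
          rw [TensorProduct.tmul_zero, map_zero, map_zero]
        smul_mem' := by
          rintro r a ⟨ha, hpa⟩
          refine ⟨Submodule.smul_mem (freeLieOn V).toSubmodule r ha, fun z => ?_⟩
          show π₁ (z ⊗ₜ (r • (⟨a, ha⟩ : freeLieOn V))) = π₂ (z ⊗ₜ (r • (⟨a, ha⟩ : freeLieOn V)))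
          rw [TensorProduct.tmul_smul, map_smul, map_smul, hpa]
        lie_mem' := by
          rintro a b ⟨ha, hpa⟩ ⟨hb, hpb⟩
          refine ⟨(freeLieOn V).lie_mem ha hb, fun z => ?_⟩
          show π₁ (z ⊗ₜ ⁅(⟨a, ha⟩ : freeLieOn V), ⟨b, hb⟩⁆)
              = π₂ (z ⊗ₜ ⁅(⟨a, ha⟩ : freeLieOn V), ⟨b, hb⟩⁆)
          rw [h₁b, h₂b, hpb (ρ ⟨a, ha⟩ z), hpa (ρ ⟨b, hb⟩ z)] }
    have hle : freeLieOn V ≤ K := by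
      rw [freeLieOn, LieSubalgebra.lieSpan_le]
      rintro _ ⟨v, rfl⟩
      refine ⟨LieSubalgebra.subset_lieSpan (Set.mem_range_self v), fun z => ?_⟩
      show π₁ (z ⊗ₜ freeLieOn.of V v) = π₂ (z ⊗ₜ freeLieOn.of V v)
      rw [h₁v, h₂v]
    intro X z
    obtain ⟨h, hp⟩ := hle X.2
    exact hp z
  exact TensorProduct.ext' fun z X => key X z

lemma pi_surj (π : (M ⊗[ℚ] (freeLieOn V)) →ₗ[ℚ] (M ⊗[ℚ] V))
    (h₁v : ∀ z (v : V), π (z ⊗ₜ freeLieOn.of V v) = z ⊗ₜ v) :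
    Function.Surjective π := by
  intro w
  induction w using TensorProduct.induction_on with
  | zero => exact ⟨0, map_zero _⟩
  | tmul z v => exact ⟨z ⊗ₜ freeLieOn.of V v, h₁v z v⟩
  | add w₁ w₂ ih₁ ih₂ =>
    obtain ⟨p₁, hp₁⟩ := ih₁
    obtain ⟨p₂, hp₂⟩ := ih₂
    exact ⟨p₁ + p₂, by rw [map_add, hp₁, hp₂]⟩

end Main

end PiAux

/-- let `L = FreeLie(V)` and let `ρ` be the tensor product of right adjoint
actions of `L` on `L^{⊗n}`. There is a unique linear map `π : L^{⊗n} ⊗ L → L^{⊗n} ⊗ V`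
such that `π (z ⊗ v) = z ⊗ v` for `v ∈ V ⊆ L` and
`π (z ⊗ ⁅X,Y⁆) = π (z·X ⊗ Y) − π (z·Y ⊗ X)` for all `X Y ∈ L`; moreover any such `π` is
surjective. -/
theorem exists_unique_pi_retraction
    (V : Type*) [AddCommGroup V] [Module ℚ V] (n : ℕ)
    (ρ : (freeLieOn V) → Module.End ℚ (⨂[ℚ]^n (freeLieOn V)))
    (hρ : ∀ (y : freeLieOn V) (x : Fin n → freeLieOn V),
      ρ y (PiTensorProduct.tprod ℚ x) =
        ∑ i : Fin n, PiTensorProduct.tprod ℚ (Function.update x i ⁅x i, y⁆)) :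
    (∃! π : (⨂[ℚ]^n (freeLieOn V)) ⊗[ℚ] (freeLieOn V) →ₗ[ℚ]
        (⨂[ℚ]^n (freeLieOn V)) ⊗[ℚ] V,
      (∀ (z : ⨂[ℚ]^n (freeLieOn V)) (v : V),
        π (z ⊗ₜ freeLieOn.of V v) = z ⊗ₜ v) ∧
      (∀ (z : ⨂[ℚ]^n (freeLieOn V)) (X Y : freeLieOn V),
        π (z ⊗ₜ ⁅X, Y⁆) = π ((ρ X z) ⊗ₜ Y) - π ((ρ Y z) ⊗ₜ X))) ∧
    (∀ π : (⨂[ℚ]^n (freeLieOn V)) ⊗[ℚ] (freeLieOn V) →ₗ[ℚ]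
        (⨂[ℚ]^n (freeLieOn V)) ⊗[ℚ] V,
      ((∀ (z : ⨂[ℚ]^n (freeLieOn V)) (v : V),
        π (z ⊗ₜ freeLieOn.of V v) = z ⊗ₜ v) ∧
       (∀ (z : ⨂[ℚ]^n (freeLieOn V)) (X Y : freeLieOn V),
        π (z ⊗ₜ ⁅X, Y⁆) = π ((ρ X z) ⊗ₜ Y) - π ((ρ Y z) ⊗ₜ X))) →
      Function.Surjective π) := by
  constructor
  · refine ⟨PiAux.piMap n ρ hρ,
      ⟨PiAux.piMap_prop1 n ρ hρ, PiAux.piMap_prop2 n ρ hρ⟩, ?_⟩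
    intro π' ⟨h'v, h'b⟩
    exact PiAux.pi_unique n ρ π' (PiAux.piMap n ρ hρ) h'v h'b
      (PiAux.piMap_prop1 n ρ hρ) (PiAux.piMap_prop2 n ρ hρ)
  · intro π ⟨hv, _⟩
    exact PiAux.pi_surj n π hv
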